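/- arXiv:2407.02237 — 7 statements merged into one kernel-verified Lean document; each statement's English description precedes it below -/
import Mathlib

section
/- Let K be a field, let V be a finite-dimensional K-vector space, and let X, Y, W₁, …, W_k be subspaces of V such that V = X ⊕ Y (that is, X ⊓ Y = ⊥ and X ⊔ Y = ⊤) and V = X ⊕ W₁ ⊕ ⋯ ⊕ W_k (that is, the family {X, W₁, …, W_k} of subspaces is independent and X ⊔ W₁ ⊔ ⋯ ⊔ W_k = ⊤). Then for every j with 1 ≤ j ≤ k one has Y ⊓ (X ⊔ W₁ ⊔ ⋯ ⊔ W_j) = ((X ⊔ W₁) ⊓ Y) ⊔ ((X ⊔ W₂) ⊓ Y) ⊔ ⋯ ⊔ ((X ⊔ W_j) ⊓ Y). -/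
/-- **General Position Projection Lemma** (Lemma 4.8 / A.1), identity part:
if `V = X ⊕ Y` and `V = X ⊕ W₁ ⊕ ⋯ ⊕ W_k`, then for every `1 ≤ j ≤ k`,
`Y ⊓ (X ⊔ W₁ ⊔ ⋯ ⊔ W_j) = ((X ⊔ W₁) ⊓ Y) ⊔ ⋯ ⊔ ((X ⊔ W_j) ⊓ Y)`. -/
theorem general_position_projection_eq
    {K V : Type*} [Field K] [AddCommGroup V] [Module K V] [FiniteDimensional K V]
    {k : ℕ} (X Y : Submodule K V) (W : Fin k → Submodule K V)
    (hXY_inf : X ⊓ Y = ⊥) (hXY_sup : X ⊔ Y = ⊤)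
    (hindep : iSupIndep (fun o : Option (Fin k) => o.elim X W))
    (hsup : X ⊔ (⨆ i, W i) = ⊤) :
    ∀ j : ℕ, 1 ≤ j → j ≤ k →
      Y ⊓ (X ⊔ ⨆ i : Fin k, ⨆ _ : (i : ℕ) < j, W i) =
        ⨆ i : Fin k, ⨆ _ : (i : ℕ) < j, ((X ⊔ W i) ⊓ Y) := by
  have main : ∀ j : ℕ, j ≤ k →
      Y ⊓ (X ⊔ ⨆ i : Fin k, ⨆ _ : (i : ℕ) < j, W i) =
        ⨆ i : Fin k, ⨆ _ : (i : ℕ) < j, ((X ⊔ W i) ⊓ Y) := by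
    intro j
    induction j with
    | zero =>
      intro _
      simp [inf_comm Y X, hXY_inf]
    | succ j ih =>
      intro hjk
      have hj : j < k := hjk
      have ihj := ih (le_of_lt hj)
      -- split the sups at index j
      have hsplitW : (⨆ i : Fin k, ⨆ _ : (i : ℕ) < j + 1, W i) =
          (⨆ i : Fin k, ⨆ _ : (i : ℕ) < j, W i) ⊔ W ⟨j, hj⟩ := by
        apply le_antisymm
        · refine iSup₂_le fun i hi => ?_
          rcases Nat.lt_succ_iff_lt_or_eq.mp hi with h | h
          · exact le_sup_of_le_left (le_iSup₂_of_le i h le_rfl)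
          · have : i = ⟨j, hj⟩ := Fin.ext h
            exact this ▸ le_sup_right
        · refine sup_le (iSup₂_le fun i hi => le_iSup₂_of_le i (Nat.lt_succ_of_lt hi) le_rfl) ?_
          exact le_iSup₂_of_le ⟨j, hj⟩ (Nat.lt_succ_self j) le_rfl
      have hsplitR : (⨆ i : Fin k, ⨆ _ : (i : ℕ) < j + 1, ((X ⊔ W i) ⊓ Y)) =
          (⨆ i : Fin k, ⨆ _ : (i : ℕ) < j, ((X ⊔ W i) ⊓ Y)) ⊔ ((X ⊔ W ⟨j, hj⟩) ⊓ Y) := by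
        apply le_antisymm
        · refine iSup₂_le fun i hi => ?_
          rcases Nat.lt_succ_iff_lt_or_eq.mp hi with h | h
          · exact le_sup_of_le_left (le_iSup₂_of_le i h le_rfl)
          · have : i = ⟨j, hj⟩ := Fin.ext h
            exact this ▸ le_sup_right
        · refine sup_le (iSup₂_le fun i hi => le_iSup₂_of_le i (Nat.lt_succ_of_lt hi) le_rfl) ?_
          exact le_iSup₂_of_le ⟨j, hj⟩ (Nat.lt_succ_self j) le_rfl
      set S := ⨆ i : Fin k, ⨆ _ : (i : ℕ) < j, W i with hS
      -- modularity: X ⊔ S = X ⊔ (Y ⊓ (X ⊔ S))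
      have hmod : X ⊔ S = X ⊔ ((X ⊔ S) ⊓ Y) := by
        have h1 := sup_inf_assoc_of_le (x := X) Y (le_sup_left : X ≤ X ⊔ S)
        rw [hXY_sup, top_inf_eq] at h1
        rw [inf_comm (X ⊔ S) Y]; exact h1
      have step : Y ⊓ ((X ⊔ S) ⊔ W ⟨j, hj⟩) =
          ((X ⊔ S) ⊓ Y) ⊔ ((X ⊔ W ⟨j, hj⟩) ⊓ Y) := by
        conv_lhs => rw [hmod]
        rw [sup_comm X ((X ⊔ S) ⊓ Y), sup_assoc ((X ⊔ S) ⊓ Y) X (W ⟨j, hj⟩),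
          inf_comm Y (((X ⊔ S) ⊓ Y) ⊔ (X ⊔ W ⟨j, hj⟩)),
          sup_inf_assoc_of_le (X ⊔ W ⟨j, hj⟩) (inf_le_right : (X ⊔ S) ⊓ Y ≤ Y)]
      calc Y ⊓ (X ⊔ ⨆ i : Fin k, ⨆ _ : (i : ℕ) < j + 1, W i)
          = Y ⊓ ((X ⊔ S) ⊔ W ⟨j, hj⟩) := by rw [hsplitW, sup_assoc]
        _ = ((X ⊔ S) ⊓ Y) ⊔ ((X ⊔ W ⟨j, hj⟩) ⊓ Y) := step
        _ = (Y ⊓ (X ⊔ S)) ⊔ ((X ⊔ W ⟨j, hj⟩) ⊓ Y) := by rw [inf_comm]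
        _ = ⨆ i : Fin k, ⨆ _ : (i : ℕ) < j + 1, ((X ⊔ W i) ⊓ Y) := by rw [ihj, hsplitR]
  intro j _ hjk
  exact main j hjk
end

section
/- Let K be a field, let V be a finite-dimensional K-vector space, and let X, Y, W₁, …, W_k be subspaces of V such that V = X ⊕ Y (that is, X ⊓ Y = ⊥ and X ⊔ Y = ⊤) and V = X ⊕ W₁ ⊕ ⋯ ⊕ W_k (that is, the family {X, W₁, …, W_k} of subspaces is independent and X ⊔ W₁ ⊔ ⋯ ⊔ W_k = ⊤). Then the family of subspaces i ↦ (X ⊔ Wᵢ) ⊓ Y, for i = 1, …, k, is independent; that is, the sum ((X ⊔ W₁) ⊓ Y) + ⋯ + ((X ⊔ W_k) ⊓ Y) is direct. -/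
/-- **General Position Projection Lemma** (Lemma 4.8 / A.1), directness part:
if `V = X ⊕ Y` and `V = X ⊕ W₁ ⊕ ⋯ ⊕ W_k`, then the family
`i ↦ (X ⊔ Wᵢ) ⊓ Y` is independent (its sum is direct). -/
theorem general_position_projection_independent
    {K V : Type*} [Field K] [AddCommGroup V] [Module K V] [FiniteDimensional K V]
    {k : ℕ} (X Y : Submodule K V) (W : Fin k → Submodule K V)
    (hXY_inf : X ⊓ Y = ⊥) (hXY_sup : X ⊔ Y = ⊤)
    (hindep : iSupIndep (fun o : Option (Fin k) => o.elim X W))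
    (hsup : X ⊔ (⨆ i, W i) = ⊤) :
    iSupIndep (fun i : Fin k => (X ⊔ W i) ⊓ Y) := by
  intro i
  set S : Submodule K V := ⨆ j, ⨆ _ : j ≠ i, W j with hS
  -- From the big independence: W i is disjoint from X ⊔ S
  have hWi : Disjoint (W i) (X ⊔ S) := by
    refine (hindep (some i)).mono_right ?_
    refine sup_le ?_ ?_
    · exact le_iSup₂_of_le none (by simp) le_rfl
    · exact iSup₂_le fun j hj => le_iSup₂_of_le (some j) (by simpa using hj) le_rfl
  -- modular law: (X ⊔ W i) ⊓ (X ⊔ S) = X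
  have hmod : (X ⊔ W i) ⊓ (X ⊔ S) = X := by
    rw [sup_inf_assoc_of_le _ (le_sup_left : X ≤ X ⊔ S),
      hWi.eq_bot, sup_bot_eq]
  -- the sup of the other pieces is contained in (X ⊔ S) ⊓ Y
  have hle : (⨆ j, ⨆ _ : j ≠ i, (X ⊔ W j) ⊓ Y) ≤ (X ⊔ S) ⊓ Y := by
    refine iSup₂_le fun j hj => inf_le_inf_right Y ?_
    exact sup_le_sup_left (le_iSup₂ (f := fun j _ => W j) j hj) X
  refine Disjoint.mono_right hle ?_
  rw [disjoint_iff]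
  calc (X ⊔ W i) ⊓ Y ⊓ ((X ⊔ S) ⊓ Y)
      = ((X ⊔ W i) ⊓ (X ⊔ S)) ⊓ Y := by
        rw [inf_assoc, inf_comm Y, inf_assoc, inf_idem, ← inf_assoc]
    _ = X ⊓ Y := by rw [hmod]
    _ = ⊥ := hXY_inf
end

section
/- Let K be a field, let V be a finite-dimensional K-vector space, and let X, Y, W₁, …, W_k be subspaces of V such that V = X ⊕ Y (that is, X ⊓ Y = ⊥ and X ⊔ Y = ⊤) and V = X ⊕ W₁ ⊕ ⋯ ⊕ W_k (that is, the family {X, W₁, …, W_k} of subspaces is independent and X ⊔ W₁ ⊔ ⋯ ⊔ W_k = ⊤). Then Y = ((X ⊔ W₁) ⊓ Y) ⊔ ((X ⊔ W₂) ⊓ Y) ⊔ ⋯ ⊔ ((X ⊔ W_k) ⊓ Y). -/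
/-- **General Position Projection Lemma** (Lemma 4.8 / A.1), decomposition of `Y`:
if `V = X ⊕ Y` and `V = X ⊕ W₁ ⊕ ⋯ ⊕ W_k`, then
`Y = ((X ⊔ W₁) ⊓ Y) ⊔ ⋯ ⊔ ((X ⊔ W_k) ⊓ Y)`. -/
theorem general_position_projection_sup_eq
    {K V : Type*} [Field K] [AddCommGroup V] [Module K V] [FiniteDimensional K V]
    {k : ℕ} (X Y : Submodule K V) (W : Fin k → Submodule K V)
    (hXY_inf : X ⊓ Y = ⊥) (hXY_sup : X ⊔ Y = ⊤)
    (hindep : iSupIndep (fun o : Option (Fin k) => o.elim X W))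
    (hsup : X ⊔ (⨆ i, W i) = ⊤) :
    Y = ⨆ i : Fin k, ((X ⊔ W i) ⊓ Y) := by
  apply le_antisymm
  · intro y hy
    have hy' : y ∈ X ⊔ ⨆ i, W i := hsup ▸ Submodule.mem_top
    obtain ⟨x, hx, w, hw, hxw⟩ := Submodule.mem_sup.mp hy'
    rw [Submodule.mem_iSup_iff_exists_finsupp] at hw
    obtain ⟨f, hf, hfsum⟩ := hw
    have hfsum' : ∑ i, f i = w := by
      rw [← hfsum, Finsupp.sum_fintype]
      intro; rfl
    -- decompose each f i along X ⊕ Y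
    have hdec : ∀ i : Fin k, ∃ z : V, z ∈ (X ⊔ W i) ⊓ Y ∧ f i - z ∈ X := by
      intro i
      have : f i ∈ X ⊔ Y := hXY_sup ▸ Submodule.mem_top
      obtain ⟨a, ha, b, hb, hab⟩ := Submodule.mem_sup.mp this
      refine ⟨b, ⟨?_, hb⟩, ?_⟩
      · have : b = f i - a := by rw [← hab]; abel
        rw [this]
        exact Submodule.sub_mem _ (Submodule.mem_sup_right (hf i))
          (Submodule.mem_sup_left ha)
      · have : f i - b = a := by rw [← hab]; abel
        rw [this]; exact ha
    choose z hz hzX using hdec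
    have hzsum : ∑ i, z i ∈ ⨆ i : Fin k, ((X ⊔ W i) ⊓ Y) := by
      exact Submodule.sum_mem _ fun i _ =>
        Submodule.mem_iSup_of_mem i (hz i)
    have hdiff : y - ∑ i, z i ∈ X ⊓ Y := by
      constructor
      · have : y - ∑ i, z i = x + ∑ i, (f i - z i) := by
          rw [Finset.sum_sub_distrib, hfsum', ← hxw]; abel
        rw [this]
        exact Submodule.add_mem _ hx (Submodule.sum_mem _ fun i _ => hzX i)
      · exact Submodule.sub_mem _ hy (Submodule.sum_mem _ fun i _ => (hz i).2)
    rw [hXY_inf, Submodule.mem_bot, sub_eq_zero] at hdiff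
    rw [hdiff]; exact hzsum
  · exact iSup_le fun i => inf_le_right
end

section
/- Let K be a field, let V be a finite-dimensional K-vector space, and let X, Y, W₁, …, W_k be subspaces of V such that V = X ⊕ Y (that is, X ⊓ Y = ⊥ and X ⊔ Y = ⊤) and V = X ⊕ W₁ ⊕ ⋯ ⊕ W_k (that is, the family {X, W₁, …, W_k} of subspaces is independent and X ⊔ W₁ ⊔ ⋯ ⊔ W_k = ⊤). Then for every j with 1 ≤ j ≤ k, the dimension of Y ⊓ (X ⊔ W₁ ⊔ ⋯ ⊔ W_j) equals the sum of the dimensions of W₁, …, W_j: finrank (Y ⊓ (X ⊔ W₁ ⊔ ⋯ ⊔ W_j)) = Σ_{i=1}^{j} finrank Wᵢ. -/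
/-- **General Position Projection Lemma** (Lemma 4.8 / A.1), dimension part:
if `V = X ⊕ Y` and `V = X ⊕ W₁ ⊕ ⋯ ⊕ W_k`, then for every `1 ≤ j ≤ k`,
`dim (Y ⊓ (X ⊔ W₁ ⊔ ⋯ ⊔ W_j)) = dim W₁ + ⋯ + dim W_j`. -/
theorem general_position_projection_finrank
    {K V : Type*} [Field K] [AddCommGroup V] [Module K V] [FiniteDimensional K V]
    {k : ℕ} (X Y : Submodule K V) (W : Fin k → Submodule K V)
    (hXY_inf : X ⊓ Y = ⊥) (hXY_sup : X ⊔ Y = ⊤)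
    (hindep : iSupIndep (fun o : Option (Fin k) => o.elim X W))
    (hsup : X ⊔ (⨆ i, W i) = ⊤) :
    ∀ j : ℕ, 1 ≤ j → j ≤ k →
      Module.finrank K ↥(Y ⊓ (X ⊔ ⨆ i : Fin k, ⨆ _ : (i : ℕ) < j, W i)) =
        ∑ i ∈ Finset.univ.filter (fun i : Fin k => (i : ℕ) < j),
          Module.finrank K ↥(W i) := by
  -- Notation for the partial sups
  set S : ℕ → Submodule K V := fun m => ⨆ i : Fin k, ⨆ _ : (i : ℕ) < m, W i with hS
  -- Key: dim (X ⊔ S m) = dim X + Σ_{i<m} dim W i for m ≤ k.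
  have key : ∀ m : ℕ, m ≤ k →
      Module.finrank K ↥(X ⊔ S m) =
        Module.finrank K ↥X + ∑ i ∈ Finset.univ.filter (fun i : Fin k => (i : ℕ) < m),
          Module.finrank K ↥(W i) := by
    intro m
    induction m with
    | zero =>
      intro _
      have h0 : S 0 = ⊥ := by
        simp [hS]
      rw [h0, sup_bot_eq]
      simp
    | succ n ih =>
      intro hnk
      have hnk' : n < k := hnk
      have hle : n ≤ k := le_of_lt hnk'
      -- S (n+1) = S n ⊔ W ⟨n⟩
      have hstep : S (n + 1) = S n ⊔ W ⟨n, hnk'⟩ := by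
        apply le_antisymm
        · refine iSup_le fun i => iSup_le fun hi => ?_
          rcases Nat.lt_or_ge (i : ℕ) n with h | h
          · exact le_sup_of_le_left (le_iSup_of_le i (le_iSup_of_le h le_rfl))
          · have : (i : ℕ) = n := by omega
            have : i = ⟨n, hnk'⟩ := Fin.ext this
            subst this
            exact le_sup_right
        · refine sup_le ?_ ?_
          · exact iSup_mono fun i => iSup_le fun hi =>
              le_iSup_of_le (Nat.lt_succ_of_lt hi) le_rfl
          · exact le_iSup_of_le ⟨n, hnk'⟩ (le_iSup_of_le (Nat.lt_succ_self n) le_rfl)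
      -- disjointness of X ⊔ S n with W ⟨n⟩
      have hdisj : (X ⊔ S n) ⊓ W ⟨n, hnk'⟩ = ⊥ := by
        have h1 := hindep (some ⟨n, hnk'⟩)
        have h2 : X ⊔ S n ≤ ⨆ o : Option (Fin k), ⨆ _ : o ≠ some ⟨n, hnk'⟩,
            (Option.elim o X W) := by
          refine sup_le ?_ ?_
          · exact le_iSup_of_le none (le_iSup_of_le (by simp) le_rfl)
          · refine iSup_le fun i => iSup_le fun hi => ?_
            refine le_iSup_of_le (some i) (le_iSup_of_le ?_ le_rfl)
            intro h
            have : i = (⟨n, hnk'⟩ : Fin k) := Option.some_injective _ h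
            subst this
            exact absurd hi (lt_irrefl _)
        have hd : Disjoint (X ⊔ S n) (W ⟨n, hnk'⟩) :=
          Disjoint.mono_left h2 h1.symm
        exact disjoint_iff.mp hd
      -- sum splits
      have hmem : (⟨n, hnk'⟩ : Fin k) ∉ Finset.univ.filter (fun i : Fin k => (i : ℕ) < n) := by
        simp
      have hset : Finset.univ.filter (fun i : Fin k => (i : ℕ) < n + 1) =
          insert (⟨n, hnk'⟩ : Fin k) (Finset.univ.filter (fun i : Fin k => (i : ℕ) < n)) := by
        ext i
        simp only [Finset.mem_filter, Finset.mem_univ, true_and, Finset.mem_insert]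
        constructor
        · intro h
          rcases Nat.lt_or_ge (i : ℕ) n with h' | h'
          · exact Or.inr h'
          · exact Or.inl (Fin.ext (show (i : ℕ) = n by omega))
        · rintro (rfl | h)
          · exact Nat.lt_succ_self n
          · exact Nat.lt_succ_of_lt h
      have hrank := Submodule.finrank_sup_add_finrank_inf_eq (X ⊔ S n) (W ⟨n, hnk'⟩)
      rw [hdisj, finrank_bot K V, add_zero] at hrank
      rw [hstep, ← sup_assoc, hrank, ih hle, hset, Finset.sum_insert hmem]
      ring
  intro j hj1 hjk
  -- Y ⊔ (X ⊔ S j) = ⊤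
  have hYsup : Y ⊔ (X ⊔ S j) = ⊤ := by
    rw [eq_top_iff, ← hXY_sup]
    exact sup_le (le_sup_of_le_right le_sup_left) le_sup_left
  have e1 := Submodule.finrank_sup_add_finrank_inf_eq Y (X ⊔ S j)
  rw [hYsup] at e1
  have e2 := Submodule.finrank_sup_add_finrank_inf_eq X Y
  rw [hXY_inf, hXY_sup, finrank_bot K V, add_zero] at e2
  have e3 := key j hjk
  have etop : Module.finrank K (⊤ : Submodule K V) = Module.finrank K V :=
    finrank_top K V
  show Module.finrank K ↥(Y ⊓ (X ⊔ S j)) = _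
  omega
end

section
/- Let n = k + l with k ≥ 2 and l ≥ 1, let α be a type, and let ξ = (ξ¹, …, ξ^{n−1}) be a map assigning to each z ∈ α a full flag of submodules of ℝⁿ satisfying the general position (hyperconvexity) condition. Fix distinct points x, y ∈ α and define, for 1 ≤ j ≤ k−1 and z ∈ α, the submodule τ_{yx}^j(z) of ξ^k(y) by: τ_{yx}^j(z) = (ξ^l(x) ⊔ ξ^j(z)) ⊓ ξ^k(y) if z ∉ {x, y}; τ_{yx}^j(x) = ξ^{l+j}(x) ⊓ ξ^k(y); and τ_{yx}^j(y) = ξ^j(y). Then for every p ≥ 2, every list of pairwise distinct points w₁, …, w_p ∈ α, and all positive integers n₁, …, n_p with each nᵢ ≤ k−1 and n₁ + ⋯ + n_p = k, the family of submodules (τ_{yx}^{nᵢ}(wᵢ))_{i=1,…,p} is independent and τ_{yx}^{n₁}(w₁) ⊔ ⋯ ⊔ τ_{yx}^{n_p}(w_p) = ξ^k(y). -/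
/-!
Since `ξ^l(x) ⊕ ξ^k(y) = ℝⁿ`, the modular law gives `ξ^l(x) ⊔ τ^j(z) = ξ^l(x) ⊔ ξ^j(z)` for
`z ≠ x` and `ξ^l(x) ⊔ τ^j(x) = ξ^{l+j}(x)`. Hence `ξ^l(x)` together with the `τ^{nᵢ}(wᵢ)` spans
a sum of flag pieces at distinct points whose indices add up to `n`, which is all of `ℝⁿ` by
general position. So the `τ^{nᵢ}(wᵢ)` span a subspace of `ξ^k(y)` of dimension at least
`n - l = k`, that is all of `ξ^k(y)`; as `dim τ^j(z) ≤ j` and `∑ nᵢ = k`, the sum is direct.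
-/

open Module

section LinearAlgebra

variable {K V ι : Type*} [Field K] [AddCommGroup V] [Module K V] [FiniteDimensional K V]

theorem Submodule.finrank_inf_add_finrank_eq_of_sup_eq_top {A B : Submodule K V}
    (h : A ⊔ B = ⊤) : finrank K ↥(A ⊓ B) + finrank K V = finrank K A + finrank K B := by
  rw [← Submodule.finrank_sup_add_finrank_inf_eq, h, finrank_top, add_comm]

variable [Fintype ι]

theorem Submodule.finrank_iSup_add_finrank_ker_lsum [DecidableEq ι] (f : ι → Submodule K V) :
    finrank K ↥(⨆ i, f i) + finrank K (LinearMap.ker (DFinsupp.lsum ℕ fun i => (f i).subtype)) =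
      ∑ i, finrank K (f i) := by
  rw [Submodule.iSup_eq_range_dfinsupp_lsum, LinearMap.finrank_range_add_finrank_ker]
  exact finrank_directSum K fun i => f i

theorem Submodule.finrank_iSup_le_sum (f : ι → Submodule K V) :
    finrank K ↥(⨆ i, f i) ≤ ∑ i, finrank K (f i) := by
  classical
  exact (finrank_iSup_add_finrank_ker_lsum f).symm ▸ Nat.le_add_right _ _

theorem iSupIndep_iff_finrank_iSup_eq_sum {f : ι → Submodule K V} :
    iSupIndep f ↔ finrank K ↥(⨆ i, f i) = ∑ i, finrank K (f i) := by
  classical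
  rw [iSupIndep_iff_dfinsupp_lsum_injective, ← LinearMap.ker_eq_bot,
    ← Submodule.finrank_iSup_add_finrank_ker_lsum f, Submodule.finrank_eq_zero.symm]
  omega

end LinearAlgebra

theorem sup_inf_eq_of_le_of_sup_eq_top {L : Type*} [Lattice L] [BoundedOrder L]
    [IsModularLattice L] {a b c : L} (hac : a ≤ c) (hab : a ⊔ b = ⊤) : a ⊔ c ⊓ b = c := by
  rw [inf_comm, ← sup_inf_assoc_of_le b hac, hab, top_inf_eq]

section Flags

variable {K V α : Type*} [Field K] [AddCommGroup V] [Module K V]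

/-- A map from `α` to full flags of an `n`-dimensional space in general position: `ξ z i` is
the `i`-dimensional piece of the flag at `z`; only the indices `1 ≤ i ≤ n - 1` are meaningful. -/
structure IsHyperconvexFlagMap (n : ℕ) (ξ : α → ℕ → Submodule K V) : Prop where
  finrank_eq : ∀ z i, 1 ≤ i → i ≤ n - 1 → finrank K ↥(ξ z i) = i
  le_succ : ∀ z i, 1 ≤ i → i ≤ n - 2 → ξ z i ≤ ξ z (i + 1)
  indep : ∀ (p : ℕ) (w : Fin p → α), Function.Injective w →
    ∀ m : Fin p → ℕ, (∀ i, 1 ≤ m i) → (∀ i, m i ≤ n - 1) →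
    (∑ i, m i) ≤ n → iSupIndep (fun i => ξ (w i) (m i))

namespace IsHyperconvexFlagMap

variable {n : ℕ} {ξ : α → ℕ → Submodule K V}

theorem mono (hξ : IsHyperconvexFlagMap n ξ) (z : α) {i j : ℕ} (hi : 1 ≤ i) (hij : i ≤ j)
    (hj : j ≤ n - 1) : ξ z i ≤ ξ z j :=
  monotoneOn_of_le_succ Set.ordConnected_Icc
    (fun a _ ha ha' => by
      simp only [Order.succ_eq_add_one, Set.mem_Icc] at ha ha'
      exact hξ.le_succ z a ha.1 (by omega))
    ⟨hi, hij.trans hj⟩ ⟨hi.trans hij, hj⟩ hij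

variable [FiniteDimensional K V]

theorem iSup_eq_top (hξ : IsHyperconvexFlagMap n ξ) (hdim : finrank K V = n) {p : ℕ}
    {w : Fin p → α} (hw : Function.Injective w) {m : Fin p → ℕ} (hm : ∀ i, 1 ≤ m i)
    (hmn : ∀ i, m i ≤ n - 1) (hsum : ∑ i, m i = n) : ⨆ i, ξ (w i) (m i) = ⊤ := by
  apply Submodule.eq_top_of_finrank_eq
  rw [iSupIndep_iff_finrank_iSup_eq_sum.1 (hξ.indep p w hw m hm hmn hsum.le), hdim, ← hsum]
  exact Finset.sum_congr rfl fun i _ => hξ.finrank_eq (w i) (m i) (hm i) (hmn i)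

theorem sup_eq_top (hξ : IsHyperconvexFlagMap n ξ) (hdim : finrank K V = n) {x y : α}
    (hxy : x ≠ y) {i j : ℕ} (hi : 1 ≤ i) (hj : 1 ≤ j) (hij : i + j = n) :
    ξ x i ⊔ ξ y j = ⊤ := by
  have h := hξ.iSup_eq_top hdim (w := ![x, y]) (m := ![i, j]) (by simp [hxy])
    (Fin.forall_fin_two.2 ⟨hi, hj⟩) (Fin.forall_fin_two.2 ⟨by simp; omega, by simp; omega⟩)
    (by simpa using hij)
  exact eq_top_iff.2 (h ▸ iSup_le (Fin.forall_fin_two.2 ⟨le_sup_left, le_sup_right⟩))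

end IsHyperconvexFlagMap

variable [DecidableEq α]

/-- The paper's `τ_{yx}^j(z)`: the projection of the flag map `ξ` into `ξ^k(y)`. -/
def frenetProj (ξ : α → ℕ → Submodule K V) (k l : ℕ) (x y : α) (j : ℕ) (z : α) :
    Submodule K V :=
  if z = x then ξ x (l + j) ⊓ ξ y k
  else if z = y then ξ y j
  else (ξ x l ⊔ ξ z j) ⊓ ξ y k

variable {ξ : α → ℕ → Submodule K V} {k l : ℕ} {x y : α}

theorem frenetProj_le {j : ℕ} (hj : ξ y j ≤ ξ y k) (z : α) :
    frenetProj ξ k l x y j z ≤ ξ y k := by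
  unfold frenetProj
  split_ifs
  exacts [inf_le_right, hj, inf_le_right]

theorem le_sup_frenetProj (hcover : ξ x l ⊔ ξ y k = ⊤) {z : α} (hzx : z ≠ x) (j : ℕ) :
    ξ z j ≤ ξ x l ⊔ frenetProj ξ k l x y j z := by
  unfold frenetProj
  rw [if_neg hzx]
  split_ifs with hzy
  · exact hzy ▸ le_sup_right
  · rw [sup_inf_eq_of_le_of_sup_eq_top le_sup_left hcover]
    exact le_sup_right

theorem sup_frenetProj_self (hcover : ξ x l ⊔ ξ y k = ⊤) {j : ℕ} (hle : ξ x l ≤ ξ x (l + j)) :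
    ξ x l ⊔ frenetProj ξ k l x y j x = ξ x (l + j) := by
  rw [frenetProj, if_pos rfl, sup_inf_eq_of_le_of_sup_eq_top hle hcover]

namespace IsHyperconvexFlagMap

variable [FiniteDimensional K V]

theorem finrank_frenetProj_le (hξ : IsHyperconvexFlagMap (k + l) ξ)
    (hdim : finrank K V = k + l) (hl : 1 ≤ l) (hcover : ξ x l ⊔ ξ y k = ⊤) {j : ℕ}
    (hj : 1 ≤ j) (hjk : j ≤ k - 1) (z : α) :
    finrank K ↥(frenetProj ξ k l x y j z) ≤ j := by
  have hyk : finrank K ↥(ξ y k) = k := hξ.finrank_eq y k (by omega) (by omega)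
  have hrank : ∀ z i, 1 ≤ i → i ≤ k + l - 1 → finrank K ↥(ξ z i) ≤ i :=
    fun z i hi hin => (hξ.finrank_eq z i hi hin).le
  have hcut : ∀ A : Submodule K V, ξ x l ≤ A →
      finrank K ↥(A ⊓ ξ y k) + (k + l) = finrank K A + k := fun A hA => by
    have h := Submodule.finrank_inf_add_finrank_eq_of_sup_eq_top
      (eq_top_iff.2 (hcover ▸ sup_le_sup_right hA (ξ y k)))
    rwa [hdim, hyk] at h
  by_cases hzx : z = x
  · rw [frenetProj, if_pos hzx]
    have := hcut (ξ x (l + j)) (hξ.mono x hl (by omega) (by omega))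
    have := hrank x (l + j) (by omega) (by omega)
    omega
  by_cases hzy : z = y
  · rw [frenetProj, if_neg hzx, if_pos hzy]
    exact hrank y j hj (by omega)
  · rw [frenetProj, if_neg hzx, if_neg hzy]
    have := hcut (ξ x l ⊔ ξ z j) le_sup_left
    have := Submodule.finrank_add_le_finrank_add_finrank (ξ x l) (ξ z j)
    have := hrank x l hl (by omega)
    have := hrank z j hj (by omega)
    omega

variable {p : ℕ} {w : Fin p → α} {m : Fin p → ℕ}

theorem sup_iSup_frenetProj_eq_top_of_mem_range (hξ : IsHyperconvexFlagMap (k + l) ξ)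
    (hdim : finrank K V = k + l) (hl : 1 ≤ l) (hcover : ξ x l ⊔ ξ y k = ⊤)
    (hw : Function.Injective w) (hm : ∀ i, 1 ≤ m i) (hmk : ∀ i, m i ≤ k - 1)
    (hsum : ∑ i, m i = k) (hx : x ∈ Set.range w) :
    ξ x l ⊔ ⨆ i, frenetProj ξ k l x y (m i) (w i) = ⊤ := by
  obtain ⟨i₀, rfl⟩ := hx
  have hsum' : ∑ i, Function.update m i₀ (l + m i₀) i = k + l := by
    rw [Finset.sum_update_of_mem (Finset.mem_univ _), ← hsum,
      Finset.sum_eq_add_sum_sdiff_singleton_of_mem (Finset.mem_univ i₀) m]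
    ring
  rw [eq_top_iff, ← hξ.iSup_eq_top hdim hw (m := Function.update m i₀ (l + m i₀))
    (fun i => by rw [Function.update_apply]; split_ifs <;> grind)
    (fun i => by rw [Function.update_apply]; split_ifs <;> grind) hsum']
  refine iSup_le fun i => ?_
  rw [Function.update_apply]
  refine le_trans ?_ (sup_le_sup_left (le_iSup _ i) _)
  split_ifs with hi
  · subst hi
    rw [sup_frenetProj_self hcover (hξ.mono _ hl (by omega) (by grind))]
  · exact le_sup_frenetProj hcover (hw.ne hi) _

theorem sup_iSup_frenetProj_eq_top_of_notMem_range (hξ : IsHyperconvexFlagMap (k + l) ξ)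
    (hdim : finrank K V = k + l) (hk : 1 ≤ k) (hl : 1 ≤ l) (hcover : ξ x l ⊔ ξ y k = ⊤)
    (hw : Function.Injective w) (hm : ∀ i, 1 ≤ m i) (hmk : ∀ i, m i ≤ k - 1)
    (hsum : ∑ i, m i = k) (hx : x ∉ Set.range w) :
    ξ x l ⊔ ⨆ i, frenetProj ξ k l x y (m i) (w i) = ⊤ := by
  rw [eq_top_iff, ← hξ.iSup_eq_top hdim (Fin.cons_injective_iff.2 ⟨hx, hw⟩) (m := Fin.cons l m)
    (Fin.forall_fin_succ.2 ⟨by simpa, by simpa⟩)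
    (Fin.forall_fin_succ.2 ⟨by simp; omega, fun i => by simp; grind⟩)
    (by rw [Fin.sum_cons, hsum, add_comm])]
  refine iSup_le (Fin.forall_fin_succ.2 ⟨by simp, fun i => ?_⟩)
  simp only [Fin.cons_succ]
  exact (le_sup_frenetProj hcover (fun h => hx ⟨i, h⟩) _).trans
    (sup_le_sup_left (le_iSup (fun i => frenetProj ξ k l x y (m i) (w i)) i) _)

theorem iSupIndep_frenetProj_and_iSup_eq (hξ : IsHyperconvexFlagMap (k + l) ξ)
    (hdim : finrank K V = k + l) (hk : 1 ≤ k) (hl : 1 ≤ l) (hxy : x ≠ y)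
    (hw : Function.Injective w) (hm : ∀ i, 1 ≤ m i) (hmk : ∀ i, m i ≤ k - 1)
    (hsum : ∑ i, m i = k) :
    iSupIndep (fun i => frenetProj ξ k l x y (m i) (w i)) ∧
      ⨆ i, frenetProj ξ k l x y (m i) (w i) = ξ y k := by
  set τ := fun i => frenetProj ξ k l x y (m i) (w i)
  have hcover : ξ x l ⊔ ξ y k = ⊤ := hξ.sup_eq_top hdim hxy hl hk (add_comm l k)
  have hyk : finrank K ↥(ξ y k) = k := hξ.finrank_eq y k hk (by omega)
  have hspan : ξ x l ⊔ ⨆ i, τ i = ⊤ := by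
    by_cases hx : x ∈ Set.range w
    · exact hξ.sup_iSup_frenetProj_eq_top_of_mem_range hdim hl hcover hw hm hmk hsum hx
    · exact hξ.sup_iSup_frenetProj_eq_top_of_notMem_range hdim hk hl hcover hw hm hmk hsum hx
  have hS : ⨆ i, τ i = ξ y k := by
    refine Submodule.eq_of_le_of_finrank_le
      (iSup_le fun i => frenetProj_le (hξ.mono y (hm i) (by grind) (by omega)) _) ?_
    have := Submodule.finrank_add_le_finrank_add_finrank (ξ x l) (⨆ i, τ i)
    rw [hspan, finrank_top, hdim, hξ.finrank_eq x l hl (by omega)] at this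
    omega
  refine ⟨iSupIndep_iff_finrank_iSup_eq_sum.2
    (le_antisymm (Submodule.finrank_iSup_le_sum τ) ?_), hS⟩
  calc ∑ i, finrank K ↥(τ i)
      ≤ ∑ i, m i := Finset.sum_le_sum fun i _ =>
        hξ.finrank_frenetProj_le hdim hl hcover (hm i) (hmk i) (w i)
    _ = finrank K ↥(⨆ i, τ i) := by rw [hS, hyk, hsum]

end IsHyperconvexFlagMap

end Flags

theorem frenet_projection_general_position_general
    {α : Type*} [DecidableEq α] (k l : ℕ) (hk : 2 ≤ k) (hl : 1 ≤ l)
    (ξ : α → ℕ → Submodule ℝ (Fin (k + l) → ℝ))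
    (hrank : ∀ z i, 1 ≤ i → i ≤ k + l - 1 → Module.finrank ℝ ↥(ξ z i) = i)
    (hmono : ∀ z i, 1 ≤ i → i ≤ k + l - 2 → ξ z i ≤ ξ z (i + 1))
    (hgp : ∀ (p : ℕ) (w : Fin p → α), Function.Injective w →
      ∀ m : Fin p → ℕ, (∀ i, 1 ≤ m i) → (∀ i, m i ≤ k + l - 1) →
      (∑ i, m i) ≤ k + l → iSupIndep (fun i => ξ (w i) (m i)))
    (x y : α) (hxy : x ≠ y)
    (τ : ℕ → α → Submodule ℝ (Fin (k + l) → ℝ))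
    (hτ : ∀ j z, τ j z =
      if z = x then ξ x (l + j) ⊓ ξ y k
      else if z = y then ξ y j
      else (ξ x l ⊔ ξ z j) ⊓ ξ y k) :
    ∀ (p : ℕ), 2 ≤ p → ∀ w : Fin p → α, Function.Injective w →
      ∀ m : Fin p → ℕ, (∀ i, 1 ≤ m i) → (∀ i, m i ≤ k - 1) →
      (∑ i, m i) = k →
      iSupIndep (fun i => τ (m i) (w i)) ∧ (⨆ i, τ (m i) (w i)) = ξ y k := by
  obtain rfl : τ = frenetProj ξ k l x y := funext₂ hτ
  intro p _ w hw m hm hmk hsum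
  exact IsHyperconvexFlagMap.iSupIndep_frenetProj_and_iSup_eq ⟨hrank, hmono, hgp⟩ (by simp)
    (by omega) hl hxy hw hm hmk hsum

/-- **Frenet Projection Lemma** (Lemma 4.9), general position (hyperconvexity) part:
if `ξ` is a map from `α` to full flags of `ℝⁿ` (`n = k + l`) in general position, and
`τ_{yx}` is the projected curve into `ξ^k(y)`, then `τ_{yx}` is in general position:
for pairwise distinct `w₁, …, w_p` and positive `n₁ + ⋯ + n_p = k` with each `nᵢ ≤ k-1`,
the family `(τ_{yx}^{nᵢ}(wᵢ))ᵢ` is independent and its sum is `ξ^k(y)`. -/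
theorem frenet_projection_general_position
    {α : Type*} [DecidableEq α] (k l : ℕ) (hk : 2 ≤ k) (hl : 1 ≤ l)
    (ξ : α → ℕ → Submodule ℝ (Fin (k + l) → ℝ))
    (hrank : ∀ z i, 1 ≤ i → i ≤ k + l - 1 → Module.finrank ℝ ↥(ξ z i) = i)
    (hmono : ∀ z i, 1 ≤ i → i ≤ k + l - 2 → ξ z i ≤ ξ z (i + 1))
    (htop : ∀ z, ξ z (k + l) = ⊤)
    (hgp : ∀ (p : ℕ) (w : Fin p → α), Function.Injective w →
      ∀ m : Fin p → ℕ, (∀ i, 1 ≤ m i) → (∀ i, m i ≤ k + l - 1) →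
      (∑ i, m i) ≤ k + l → iSupIndep (fun i => ξ (w i) (m i)))
    (x y : α) (hxy : x ≠ y)
    (τ : ℕ → α → Submodule ℝ (Fin (k + l) → ℝ))
    (hτ : ∀ j z, τ j z =
      if z = x then ξ x (l + j) ⊓ ξ y k
      else if z = y then ξ y j
      else (ξ x l ⊔ ξ z j) ⊓ ξ y k) :
    ∀ (p : ℕ), 2 ≤ p → ∀ w : Fin p → α, Function.Injective w →
      ∀ m : Fin p → ℕ, (∀ i, 1 ≤ m i) → (∀ i, m i ≤ k - 1) →
      (∑ i, m i) = k →
      iSupIndep (fun i => τ (m i) (w i)) ∧ (⨆ i, τ (m i) (w i)) = ξ y k :=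
  frenet_projection_general_position_general k l hk hl ξ hrank hmono hgp x y hxy τ hτ
end

section
/- Let n = k + l with k ≥ 2 and l ≥ 1, let α be a type, and let ξ = (ξ¹, …, ξ^{n−1}) be a map assigning to each z ∈ α a full flag of submodules of ℝⁿ satisfying the general position (hyperconvexity) condition. Fix distinct points x, y ∈ α and define, for 1 ≤ j ≤ k−1 and z ∈ α, the submodule τ_{yx}^j(z) of ξ^k(y) by: τ_{yx}^j(z) = (ξ^l(x) ⊔ ξ^j(z)) ⊓ ξ^k(y) if z ∉ {x, y}; τ_{yx}^j(x) = ξ^{l+j}(x) ⊓ ξ^k(y); and τ_{yx}^j(y) = ξ^j(y). Then for every z ∈ α and every 1 ≤ j ≤ k−1 one has finrank τ_{yx}^j(z) = j, τ_{yx}^j(z) ≤ ξ^k(y), and τ_{yx}^j(z) ≤ τ_{yx}^{j+1}(z) whenever j ≤ k−2; that is, τ_{yx}(z) is a full flag in the k-dimensional space ξ^k(y). -/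
/-!
General position makes `ξ^l(x)` and `ξ^k(y)` transverse, and their dimensions add up to `k + l`,
so they are complementary; hence intersecting with `ξ^k(y)` lowers by `l` the dimension of every
subspace containing `ξ^l(x)`. Both `ξ^{l+j}(x)` and, for `z ∉ {x, y}`, the sum `ξ^l(x) ⊔ ξ^j(z)`
(direct by general position) are such subspaces of dimension `l + j`, so `τ^j(z)` has dimension
`j`; the inclusions are inherited from those of the flags.
-/

open Module

section GeneralPosition

variable {α K V : Type*} [Semiring K] [AddCommMonoid V] [Module K V]

def GeneralPosition (n : ℕ) (ξ : α → ℕ → Submodule K V) : Prop :=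
  ∀ (p : ℕ) (w : Fin p → α), Function.Injective w →
    ∀ m : Fin p → ℕ, (∀ i, 1 ≤ m i) → (∀ i, m i ≤ n - 1) →
    (∑ i, m i) ≤ n → iSupIndep (fun i => ξ (w i) (m i))

theorem GeneralPosition.disjoint {n : ℕ} {ξ : α → ℕ → Submodule K V}
    (h : GeneralPosition n ξ) {a b : α} (hab : a ≠ b) {p q : ℕ} (hp : 1 ≤ p) (hq : 1 ≤ q)
    (hpq : p + q ≤ n) : Disjoint (ξ a p) (ξ b q) := by
  have hinj : Function.Injective ![a, b] := by
    simp [Function.Injective, Fin.forall_fin_two, hab, hab.symm]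
  have hindep := h 2 ![a, b] hinj ![p, q] (by simp [Fin.forall_fin_two, hp, hq])
    (by simp [Fin.forall_fin_two]; omega)
    (by simpa [Fin.sum_univ_two] using hpq)
  simpa [Function.onFun] using hindep.pairwiseDisjoint (show (0 : Fin 2) ≠ 1 by decide)

end GeneralPosition

theorem monotoneOn_Icc_of_le_succ {β : Type*} [Preorder β] {f : ℕ → β} {a b : ℕ}
    (hf : ∀ i, a ≤ i → i + 1 ≤ b → f i ≤ f (i + 1)) : MonotoneOn f (Set.Icc a b) :=
  monotoneOn_of_le_succ Set.ordConnected_Icc fun i _ hi hi' => by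
    rw [Order.succ_eq_add_one] at hi' ⊢
    exact hf i hi.1 hi'.2

section FiniteDimensional

variable {K V : Type*} [DivisionRing K] [AddCommGroup V] [Module K V]

theorem Submodule.finrank_sup_of_disjoint {s t : Submodule K V} [FiniteDimensional K s]
    [FiniteDimensional K t] (h : Disjoint s t) :
    finrank K ↥(s ⊔ t) = finrank K s + finrank K t := by
  rw [← finrank_sup_add_finrank_inf_eq s t, h.eq_bot, finrank_bot, add_zero]

theorem Submodule.finrank_inf_add_finrank_of_isCompl [FiniteDimensional K V]
    {U B W : Submodule K V} (h : IsCompl U B) (hUW : U ≤ W) :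
    finrank K ↥(W ⊓ B) + finrank K U = finrank K W := by
  have hWB : W ⊔ B = ⊤ := top_unique (h.sup_eq_top ▸ sup_le_sup_right hUW B)
  have hdim := finrank_sup_add_finrank_inf_eq W B
  rw [hWB, finrank_top, ← finrank_add_eq_of_isCompl h] at hdim
  omega

end FiniteDimensional

theorem frenet_projection_is_flag_general
    {α : Type*} [DecidableEq α] (k l : ℕ) (hl : 1 ≤ l)
    (ξ : α → ℕ → Submodule ℝ (Fin (k + l) → ℝ))
    (hrank : ∀ z i, 1 ≤ i → i ≤ k + l - 1 → Module.finrank ℝ ↥(ξ z i) = i)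
    (hmono : ∀ z i, 1 ≤ i → i ≤ k + l - 2 → ξ z i ≤ ξ z (i + 1))
    (hgp : ∀ (p : ℕ) (w : Fin p → α), Function.Injective w →
      ∀ m : Fin p → ℕ, (∀ i, 1 ≤ m i) → (∀ i, m i ≤ k + l - 1) →
      (∑ i, m i) ≤ k + l → iSupIndep (fun i => ξ (w i) (m i)))
    (x y : α) (hxy : x ≠ y)
    (τ : ℕ → α → Submodule ℝ (Fin (k + l) → ℝ))
    (hτ : ∀ j z, τ j z =
      if z = x then ξ x (l + j) ⊓ ξ y k
      else if z = y then ξ y j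
      else (ξ x l ⊔ ξ z j) ⊓ ξ y k) :
    ∀ (z : α) (j : ℕ), 1 ≤ j → j ≤ k - 1 →
      Module.finrank ℝ ↥(τ j z) = j ∧ τ j z ≤ ξ y k ∧
        (j ≤ k - 2 → τ j z ≤ τ (j + 1) z) := by
  intro z j hj hjk
  have hgen : GeneralPosition (k + l) ξ := hgp
  have hflag z : MonotoneOn (ξ z) (Set.Icc 1 (k + l - 1)) :=
    monotoneOn_Icc_of_le_succ fun i hi hi' => hmono z i hi (by omega)
  have hcompl : IsCompl (ξ x l) (ξ y k) :=
    (Submodule.isCompl_iff_disjoint _ _ (by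
      rw [finrank_fin_fun, hrank x l hl (by omega), hrank y k (by omega) (by omega)]; omega)).2
      (hgen.disjoint hxy hl (by omega) (by omega))
  have hproj (W : Submodule ℝ (Fin (k + l) → ℝ)) (hW : ξ x l ≤ W) (hdim : finrank ℝ W = l + j) :
      finrank ℝ ↥(W ⊓ ξ y k) = j := by
    have := Submodule.finrank_inf_add_finrank_of_isCompl hcompl hW
    rw [hrank x l hl (by omega)] at this
    omega
  obtain rfl | hzx := eq_or_ne z x
  · have hτx m : τ m z = ξ z (l + m) ⊓ ξ y k := by rw [hτ, if_pos rfl]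
    rw [hτx j, hτx (j + 1)]
    exact ⟨hproj _ (hflag z ⟨hl, by omega⟩ ⟨by omega, by omega⟩ (by omega))
        (hrank z _ (by omega) (by omega)),
      inf_le_right, fun _ => inf_le_inf_right _ (hmono z _ (by omega) (by omega))⟩
  obtain rfl | hzy := eq_or_ne z y
  · have hτy m : τ m z = ξ z m := by rw [hτ, if_neg hzx, if_pos rfl]
    rw [hτy j, hτy (j + 1)]
    exact ⟨hrank z j hj (by omega), hflag z ⟨hj, by omega⟩ ⟨by omega, by omega⟩ (by omega),
      fun _ => hmono z j hj (by omega)⟩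
  have hτz m : τ m z = (ξ x l ⊔ ξ z m) ⊓ ξ y k := by rw [hτ, if_neg hzx, if_neg hzy]
  rw [hτz j, hτz (j + 1)]
  refine ⟨hproj _ le_sup_left ?_, inf_le_right,
    fun _ => inf_le_inf_right _ (sup_le_sup_left (hmono z j hj (by omega)) _)⟩
  rw [Submodule.finrank_sup_of_disjoint (hgen.disjoint hzx.symm hl hj (by omega)),
    hrank x l hl (by omega), hrank z j hj (by omega)]

/-- **Frenet Projection Lemma** (Lemma 4.9), flag part: the projected curve
`τ_{yx}` takes values in full flags of the `k`-dimensional space `ξ^k(y)`: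
for every `z` and `1 ≤ j ≤ k-1`, `dim τ_{yx}^j(z) = j`, `τ_{yx}^j(z) ≤ ξ^k(y)`,
and `τ_{yx}^j(z) ≤ τ_{yx}^{j+1}(z)` whenever `j ≤ k-2`. -/
theorem frenet_projection_is_flag
    {α : Type*} [DecidableEq α] (k l : ℕ) (hk : 2 ≤ k) (hl : 1 ≤ l)
    (ξ : α → ℕ → Submodule ℝ (Fin (k + l) → ℝ))
    (hrank : ∀ z i, 1 ≤ i → i ≤ k + l - 1 → Module.finrank ℝ ↥(ξ z i) = i)
    (hmono : ∀ z i, 1 ≤ i → i ≤ k + l - 2 → ξ z i ≤ ξ z (i + 1))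
    (htop : ∀ z, ξ z (k + l) = ⊤)
    (hgp : ∀ (p : ℕ) (w : Fin p → α), Function.Injective w →
      ∀ m : Fin p → ℕ, (∀ i, 1 ≤ m i) → (∀ i, m i ≤ k + l - 1) →
      (∑ i, m i) ≤ k + l → iSupIndep (fun i => ξ (w i) (m i)))
    (x y : α) (hxy : x ≠ y)
    (τ : ℕ → α → Submodule ℝ (Fin (k + l) → ℝ))
    (hτ : ∀ j z, τ j z =
      if z = x then ξ x (l + j) ⊓ ξ y k
      else if z = y then ξ y j
      else (ξ x l ⊔ ξ z j) ⊓ ξ y k) :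
    ∀ (z : α) (j : ℕ), 1 ≤ j → j ≤ k - 1 →
      Module.finrank ℝ ↥(τ j z) = j ∧ τ j z ≤ ξ y k ∧
        (j ≤ k - 2 → τ j z ≤ τ (j + 1) z) :=
  frenet_projection_is_flag_general k l hl ξ hrank hmono hgp x y hxy τ hτ
end

section
/- Let α be a type and let ξ³ assign to each point of α a submodule of ℝ⁴ such that: (i) for all pairwise distinct x, y, z ∈ α, the intersection ξ³(x) ⊓ ξ³(y) ⊓ ξ³(z) is nonzero; and (ii) for all pairwise distinct x, y, z, w ∈ α, the intersection ξ³(x) ⊓ ξ³(y) ⊓ ξ³(z) ⊓ ξ³(w) = ⊥. Then the triple intersection determines the underlying set of points: if x, y, z are pairwise distinct, x', y', z' are pairwise distinct, and ξ³(x) ⊓ ξ³(y) ⊓ ξ³(z) = ξ³(x') ⊓ ξ³(y') ⊓ ξ³(z'), then {x, y, z} = {x', y', z'} as sets. -/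
lemma devCtaf_key {α : Type*} (ξ3 : α → Submodule ℝ (Fin 4 → ℝ))
    (h3 : ∀ x y z : α, x ≠ y → x ≠ z → y ≠ z → ξ3 x ⊓ ξ3 y ⊓ ξ3 z ≠ ⊥)
    (h4 : ∀ x y z w : α, x ≠ y → x ≠ z → x ≠ w → y ≠ z → y ≠ w → z ≠ w →
      ξ3 x ⊓ ξ3 y ⊓ ξ3 z ⊓ ξ3 w = ⊥)
    (x y z w : α) (hxy : x ≠ y) (hxz : x ≠ z) (hyz : y ≠ z)
    (hle : ξ3 x ⊓ ξ3 y ⊓ ξ3 z ≤ ξ3 w) : w = x ∨ w = y ∨ w = z := by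
  by_contra h
  push_neg at h
  obtain ⟨h1, h2, h3'⟩ := h
  have := h4 x y z w hxy hxz (Ne.symm h1) hyz (Ne.symm h2) (Ne.symm h3')
  exact h3 x y z hxy hxz hyz (le_antisymm (this ▸ le_inf le_rfl hle) bot_le)

/-- Fiber computation for `dev_ctaf` (Proposition 3.3): if triple intersections of the
planes `ξ³` are nonzero but all quadruple intersections vanish, then the triple
intersection determines the underlying set of three points. -/
theorem devCtaf_fiber
    {α : Type*} (ξ3 : α → Submodule ℝ (Fin 4 → ℝ))
    (h3 : ∀ x y z : α, x ≠ y → x ≠ z → y ≠ z → ξ3 x ⊓ ξ3 y ⊓ ξ3 z ≠ ⊥)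
    (h4 : ∀ x y z w : α, x ≠ y → x ≠ z → x ≠ w → y ≠ z → y ≠ w → z ≠ w →
      ξ3 x ⊓ ξ3 y ⊓ ξ3 z ⊓ ξ3 w = ⊥)
    (x y z x' y' z' : α)
    (hxy : x ≠ y) (hxz : x ≠ z) (hyz : y ≠ z)
    (hxy' : x' ≠ y') (hxz' : x' ≠ z') (hyz' : y' ≠ z')
    (heq : ξ3 x ⊓ ξ3 y ⊓ ξ3 z = ξ3 x' ⊓ ξ3 y' ⊓ ξ3 z') :
    ({x, y, z} : Set α) = {x', y', z'} := by
  have lx' := devCtaf_key ξ3 h3 h4 x y z x' hxy hxz hyz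
    (heq ▸ inf_le_of_left_le (inf_le_of_left_le le_rfl))
  have ly' := devCtaf_key ξ3 h3 h4 x y z y' hxy hxz hyz
    (heq ▸ inf_le_of_left_le inf_le_right)
  have lz' := devCtaf_key ξ3 h3 h4 x y z z' hxy hxz hyz (heq ▸ inf_le_right)
  have lx := devCtaf_key ξ3 h3 h4 x' y' z' x hxy' hxz' hyz'
    (heq ▸ inf_le_of_left_le (inf_le_of_left_le le_rfl))
  have ly := devCtaf_key ξ3 h3 h4 x' y' z' y hxy' hxz' hyz'
    (heq ▸ inf_le_of_left_le inf_le_right)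
  have lz := devCtaf_key ξ3 h3 h4 x' y' z' z hxy' hxz' hyz' (heq ▸ inf_le_right)
  apply Set.eq_of_subset_of_subset
  · intro a ha
    rcases ha with rfl | rfl | rfl
    · rcases lx with rfl | rfl | rfl <;> simp
    · rcases ly with rfl | rfl | rfl <;> simp
    · rcases lz with rfl | rfl | rfl <;> simp
  · intro a ha
    rcases ha with rfl | rfl | rfl
    · rcases lx' with rfl | rfl | rfl <;> simp
    · rcases ly' with rfl | rfl | rfl <;> simp
    · rcases lz' with rfl | rfl | rfl <;> simp
end
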